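/- arXiv:0803.4022 — 7 statements merged into one kernel-verified Lean document; each statement's English description precedes it below -/
import Mathlib

section
/- Let A be a bounded linear operator on a real Hilbert space H and P a bounded operator such that T := PA is self-adjoint and nonnegative with N(T) = N(A). Suppose Ay = f and u₀ - y ⟂ N(A). Then the unique solution u(t) of u'(t) = -P(Au(t) - f), u(0) = u₀, converges in norm to y as t → ∞. -/
open Filter Topology Set
open scoped RealInnerProductSpace

/-!
With `v = u - y` the equation becomes `v' = -T v`. Symmetry of `T` makes
`r ↦ ⟪v (t + r), v (s - r)⟫` constant, so `⟪v t, v s⟫ = ‖v ((t + s) / 2)‖²`, and positivity of `T`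
makes `‖v‖` nonincreasing; by the parallelogram law `v` is then Cauchy. Its limit `w` satisfies
`T w = 0`, because `v` converges while `v' = -T v → -T w`, and `w ⟂ ker T`, because `⟪z, v t⟫` is
constant for `z ∈ ker T`. Hence `w = 0`.
-/

theorem Real.eq_zero_of_tendsto_of_tendsto_hasDerivAt {g g' : ℝ → ℝ} {L c : ℝ}
    (hg : ∀ t, HasDerivAt g (g' t) t) (hL : Tendsto g atTop (𝓝 L))
    (hc : Tendsto g' atTop (𝓝 c)) : c = 0 := by
  have hmvt (t : ℝ) : ∃ ξ ∈ Ioo t (t + 1), g' ξ = (g (t + 1) - g t) / (t + 1 - t) :=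
    exists_hasDerivAt_eq_slope g g' (by linarith)
      (fun x _ => (hg x).continuousAt.continuousWithinAt) (fun x _ => hg x)
  choose ξ hξ hslope using hmvt
  have hξ_top : Tendsto ξ atTop atTop :=
    tendsto_atTop_mono (fun t => (hξ t).1.le) tendsto_id
  have hincr : Tendsto (fun t => g (t + 1) - g t) atTop (𝓝 (L - L)) :=
    (hL.comp (tendsto_atTop_add_const_right _ 1 tendsto_id)).sub hL
  have hderiv : Tendsto (fun t => g (t + 1) - g t) atTop (𝓝 c) := by
    refine (hc.comp hξ_top).congr fun t => ?_
    simp [hslope]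
  simpa using tendsto_nhds_unique hderiv hincr

theorem eq_zero_of_tendsto_of_tendsto_hasDerivAt {E : Type*} [NormedAddCommGroup E]
    [NormedSpace ℝ E] {g g' : ℝ → E} {L c : E}
    (hg : ∀ t, HasDerivAt g (g' t) t) (hL : Tendsto g atTop (𝓝 L))
    (hc : Tendsto g' atTop (𝓝 c)) : c = 0 := by
  by_contra hc0
  obtain ⟨φ, -, hφc⟩ := exists_dual_vector ℝ c (norm_ne_zero_iff.mpr hc0)
  have hφ := Real.eq_zero_of_tendsto_of_tendsto_hasDerivAt
    (fun t => φ.hasFDerivAt.comp_hasDerivAt t (hg t))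
    ((φ.continuous.tendsto L).comp hL) ((φ.continuous.tendsto c).comp hc)
  rw [hφc] at hφ
  exact hc0 (norm_eq_zero.mp hφ)

theorem cauchySeq_of_inner_eq_norm_sq_midpoint {E : Type*} [NormedAddCommGroup E]
    [InnerProductSpace ℝ E] {v : ℝ → E}
    (hmid : ∀ t s, ⟪v t, v s⟫ = ‖v ((t + s) / 2)‖ ^ 2) (hanti : Antitone (‖v ·‖)) :
    CauchySeq v := by
  obtain ⟨ℓ, hℓ⟩ : ∃ ℓ, Tendsto (‖v ·‖ ^ 2) atTop (𝓝 ℓ) :=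
    ⟨_, (tendsto_atTop_ciInf hanti ⟨0, by rintro _ ⟨t, rfl⟩; positivity⟩).pow 2⟩
  have hdist_sq (p : ℝ × ℝ) : dist (v p.1) (v p.2) ^ 2
      = ‖v p.1‖ ^ 2 + ‖v p.2‖ ^ 2 - 2 * ‖v ((p.1 + p.2) / 2)‖ ^ 2 := by
    rw [dist_eq_norm, norm_sub_sq_real, hmid]
    ring
  have hmid_top : Tendsto (fun p : ℝ × ℝ => (p.1 + p.2) / 2) (atTop ×ˢ atTop) atTop :=
    (tendsto_fst.atTop_add_atTop tendsto_snd).atTop_div_const two_pos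
  have hsq : Tendsto (fun p : ℝ × ℝ => dist (v p.1) (v p.2) ^ 2) (atTop ×ˢ atTop) (𝓝 0) := by
    have h := ((hℓ.comp tendsto_fst).add (hℓ.comp tendsto_snd)).sub
      ((hℓ.comp hmid_top).const_mul 2)
    rw [show ℓ + ℓ - 2 * ℓ = 0 by ring] at h
    exact h.congr fun p => (hdist_sq p).symm
  rw [cauchySeq_iff_tendsto_dist_atTop_0, ← prod_atTop_atTop_eq]
  simpa [Real.sqrt_sq dist_nonneg] using hsq.sqrt

section GradientFlow

variable {H : Type*} [NormedAddCommGroup H] [InnerProductSpace ℝ H] {T : H →L[ℝ] H} {v : ℝ → H}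

theorem inner_eq_norm_sq_midpoint_of_hasDerivAt (hT : (T : H →ₗ[ℝ] H).IsSymmetric)
    (hv : ∀ t, HasDerivAt v (-T (v t)) t) (t s : ℝ) :
    ⟪v t, v s⟫ = ‖v ((t + s) / 2)‖ ^ 2 := by
  have hd (r : ℝ) : HasDerivAt (fun r => ⟪v (t + r), v (s - r)⟫) 0 r := by
    have hf := (hv (t + r)).scomp r ((hasDerivAt_id' r).const_add t)
    have hg := (hv (s - r)).scomp r ((hasDerivAt_id' r).const_sub s)
    refine (hf.inner ℝ hg).congr_deriv ?_
    simp [inner_neg_left, ← ContinuousLinearMap.coe_coe, hT _ (v (s - r))]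
  have hconst := is_const_of_deriv_eq_zero (fun r => (hd r).differentiableAt)
    (fun r => (hd r).deriv) 0 ((s - t) / 2)
  rw [← real_inner_self_eq_norm_sq]
  convert hconst using 3 <;> ring_nf

theorem antitone_norm_of_hasDerivAt (hpos : ∀ x, 0 ≤ ⟪T x, x⟫)
    (hv : ∀ t, HasDerivAt v (-T (v t)) t) : Antitone (‖v ·‖) := by
  have hsq : Antitone (‖v ·‖ ^ 2) := antitone_of_hasDerivAt_nonpos (fun t => (hv t).norm_sq)
    fun t => by simpa [inner_neg_right, real_inner_comm] using hpos (v t)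
  exact fun a b hab => (pow_le_pow_iff_left₀ (norm_nonneg _) (norm_nonneg _) two_ne_zero).mp
    (hsq hab)

theorem mem_orthogonal_ker_of_hasDerivAt (hT : (T : H →ₗ[ℝ] H).IsSymmetric)
    (hv : ∀ t, HasDerivAt v (-T (v t)) t) (h0 : v 0 ∈ (LinearMap.ker (T : H →ₗ[ℝ] H))ᗮ)
    (t : ℝ) : v t ∈ (LinearMap.ker (T : H →ₗ[ℝ] H))ᗮ := by
  intro z hz
  have hd (r : ℝ) : HasDerivAt (fun r => ⟪z, v r⟫) 0 r := by
    refine ((hasDerivAt_const r z).inner ℝ (hv r)).congr_deriv ?_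
    simp [inner_neg_right, ← ContinuousLinearMap.coe_coe, ← hT z (v r), LinearMap.mem_ker.mp hz]
  rw [is_const_of_deriv_eq_zero (fun r => (hd r).differentiableAt) (fun r => (hd r).deriv) t 0]
  exact h0 z hz

end GradientFlow

/-- Let `A` be a bounded linear operator on a real Hilbert space `H` and `P` a bounded
operator such that `T := PA` is self-adjoint and nonnegative with `N(T) = N(A)`. Suppose
`Ay = f` and `u₀ - y ⟂ N(A)`. Then the solution `u(t)` of `u'(t) = -P(Au(t) - f)`,
`u(0) = u₀`, converges in norm to `y` as `t → ∞`. -/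
theorem stmt3 {H : Type*} [NormedAddCommGroup H] [InnerProductSpace ℝ H] [CompleteSpace H]
    (A P : H →L[ℝ] H) (hsa : IsSelfAdjoint (P ∘L A))
    (hpos : ∀ x : H, 0 ≤ (inner ℝ ((P ∘L A) x) x : ℝ))
    (hker : LinearMap.ker ((P ∘L A) : H →ₗ[ℝ] H) = LinearMap.ker (A : H →ₗ[ℝ] H))
    (f y u₀ : H) (hy : A y = f) (horth : u₀ - y ∈ (LinearMap.ker (A : H →ₗ[ℝ] H))ᗮ)
    (u : ℝ → H) (hu0 : u 0 = u₀)
    (hu : ∀ t : ℝ, HasDerivAt u (-(P (A (u t) - f))) t) :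
    Filter.Tendsto u Filter.atTop (nhds y) := by
  set T := P ∘L A
  have hT : (T : H →ₗ[ℝ] H).IsSymmetric := hsa.isSymmetric
  have hv (t : ℝ) : HasDerivAt (u · - y) (-T (u t - y)) t := by
    simpa [T, hy] using (hu t).sub_const y
  obtain ⟨w, hw⟩ := cauchySeq_tendsto_of_complete <| cauchySeq_of_inner_eq_norm_sq_midpoint
    (inner_eq_norm_sq_midpoint_of_hasDerivAt hT hv) (antitone_norm_of_hasDerivAt hpos hv)
  have hw_ker : w ∈ LinearMap.ker (T : H →ₗ[ℝ] H) := neg_eq_zero.mp <|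
    eq_zero_of_tendsto_of_tendsto_hasDerivAt hv hw ((T.continuous.tendsto w).comp hw).neg
  have hw_perp : w ∈ (LinearMap.ker (T : H →ₗ[ℝ] H))ᗮ :=
    (Submodule.isClosed_orthogonal _).mem_of_tendsto hw <| Eventually.of_forall <|
      mem_orthogonal_ker_of_hasDerivAt hT hv (by rwa [hu0, hker])
  have hw0 : w = 0 := Submodule.disjoint_def.mp (Submodule.orthogonal_disjoint _) w hw_ker hw_perp
  simpa [hw0] using hw.add_const y
end

section
/- Let A, P be bounded operators on a real Hilbert space with Q := AP self-adjoint and nonnegative. Let u_δ(t) solve u_δ' = -P(Au_δ - f_δ), u_δ(0) = u₀. Then t ↦ ‖Au_δ(t) - f_δ‖ is nonincreasing on [0, ∞). -/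
open scoped InnerProductSpace

theorem antitone_norm_of_inner_deriv_nonpos {E : Type*} [NormedAddCommGroup E]
    [InnerProductSpace ℝ E] {v v' : ℝ → E} (hv : ∀ t, HasDerivAt v (v' t) t)
    (hv' : ∀ t, ⟪v t, v' t⟫_ℝ ≤ 0) : Antitone fun t => ‖v t‖ := by
  have hsq : Antitone fun t => ‖v t‖ ^ 2 :=
    antitone_of_hasDerivAt_nonpos (fun t => (hv t).norm_sq) fun t =>
      mul_nonpos_of_nonneg_of_nonpos zero_le_two (hv' t)
  intro s t hst
  exact (pow_le_pow_iff_left₀ (norm_nonneg _) (norm_nonneg _) two_ne_zero).1 (hsq hst)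

theorem hasDerivAt_apply_sub_of_hasDerivAt {E : Type*} [NormedAddCommGroup E]
    [NormedSpace ℝ E] (A P : E →L[ℝ] E) (f : E) {u : ℝ → E}
    (hu : ∀ t, HasDerivAt u (-(P (A (u t) - f))) t) (t : ℝ) :
    HasDerivAt (fun t => A (u t) - f) (-((A ∘L P) (A (u t) - f))) t := by
  simpa using (A.hasFDerivAt.comp_hasDerivAt t (hu t)).sub_const f

theorem stmt7_general {H : Type*} [NormedAddCommGroup H] [InnerProductSpace ℝ H]
    (A P : H →L[ℝ] H)
    (hpos : ∀ x : H, 0 ≤ (inner ℝ ((A ∘L P) x) x : ℝ))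
    (fδ : H) (u : ℝ → H)
    (hu : ∀ t : ℝ, HasDerivAt u (-(P (A (u t) - fδ))) t) :
    AntitoneOn (fun t : ℝ => ‖A (u t) - fδ‖) (Set.Ici (0:ℝ)) := by
  refine Antitone.antitoneOn ?_ _
  refine antitone_norm_of_inner_deriv_nonpos (hasDerivAt_apply_sub_of_hasDerivAt A P fδ hu)
    fun t => ?_
  rw [inner_neg_right, real_inner_comm, neg_nonpos]
  exact hpos _

/-- Let `A, P` be bounded operators on a real Hilbert space with `Q := AP` self-adjoint and
nonnegative. Let `u_δ(t)` solve `u_δ' = -P(Au_δ - f_δ)`, `u_δ(0) = u₀`. Then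
`t ↦ ‖Au_δ(t) - f_δ‖` is nonincreasing on `[0, ∞)`. -/
theorem stmt7 {H : Type*} [NormedAddCommGroup H] [InnerProductSpace ℝ H] [CompleteSpace H]
    (A P : H →L[ℝ] H) (hsa : IsSelfAdjoint (A ∘L P))
    (hpos : ∀ x : H, 0 ≤ (inner ℝ ((A ∘L P) x) x : ℝ))
    (fδ u₀ : H) (u : ℝ → H) (hu0 : u 0 = u₀)
    (hu : ∀ t : ℝ, HasDerivAt u (-(P (A (u t) - fδ))) t) :
    AntitoneOn (fun t : ℝ => ‖A (u t) - fδ‖) (Set.Ici (0:ℝ)) :=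
  stmt7_general A P hpos fδ u hu
end

section
/- Let A, P be bounded operators, T := PA, Q := AP, and let u_δ(t) = e^{-tT}u₀ + ∫₀ᵗ e^{-(t-s)T} P f_δ ds be the solution of u_δ' = -P(Au_δ - f_δ), u_δ(0) = u₀. Then Au_δ(t) - f_δ = e^{-tQ}(Au₀ - f_δ) for all t ≥ 0. -/
open NormedSpace

section LinearODE

variable {E : Type*} [NormedAddCommGroup E] [NormedSpace ℝ E] [CompleteSpace E]

theorem exp_smul_apply_eq_of_hasDerivAt_neg {Q : E →L[ℝ] E} {w : ℝ → E}
    (hw : ∀ t, HasDerivAt w (-Q (w t)) t) (t : ℝ) :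
    exp (t • Q) (w t) = w 0 := by
  -- product rule: the derivative is `exp (s • Q) (Q (w s)) + exp (s • Q) (-Q (w s)) = 0`
  have hderiv : ∀ s, HasDerivAt (fun s : ℝ => exp (s • Q) (w s)) 0 s := fun s => by
    simpa [mul_apply_eq_comp] using
      (hasDerivAt_exp_smul_const Q s).clm_apply (hw s)
  simpa using is_const_of_deriv_eq_zero (fun s => (hderiv s).differentiableAt)
    (fun s => (hderiv s).deriv) t 0

theorem eq_exp_neg_smul_apply_of_hasDerivAt_neg {Q : E →L[ℝ] E} {w : ℝ → E}
    (hw : ∀ t, HasDerivAt w (-Q (w t)) t) (t : ℝ) :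
    w t = exp (-(t • Q)) (w 0) := by
  let +nondep : NormedAlgebra ℚ (E →L[ℝ] E) := .restrictScalars ℚ ℝ _
  have hinv : exp (-(t • Q)) * exp (t • Q) = 1 := by
    rw [← exp_add_of_commute (Commute.refl (t • Q)).neg_left, neg_add_cancel, exp_zero]
  rw [← exp_smul_apply_eq_of_hasDerivAt_neg hw t, ← mul_apply_eq_comp, hinv, one_apply_eq_self]

end LinearODE

theorem hasDerivAt_residual {E F : Type*} [NormedAddCommGroup E] [NormedSpace ℝ E]
    [NormedAddCommGroup F] [NormedSpace ℝ F] {A : E →L[ℝ] F} {P : F →L[ℝ] E} {f : F}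
    {u : ℝ → E} {t : ℝ} (hu : HasDerivAt u (-P (A (u t) - f)) t) :
    HasDerivAt (fun s => A (u s) - f) (-(A ∘L P) (A (u t) - f)) t := by
  simpa using (A.hasFDerivAt.comp_hasDerivAt t hu).sub_const f

/-- DSM residual representation: if `u_δ` solves `u_δ' = -P(Au_δ - f_δ)`, `u_δ(0) = u₀`,
then `Au_δ(t) - f_δ = e^{-tQ}(Au₀ - f_δ)` for all `t ≥ 0`, where `Q := AP`. -/
theorem stmt9 {H : Type*} [NormedAddCommGroup H] [InnerProductSpace ℝ H] [CompleteSpace H]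
    (A P : H →L[ℝ] H) (fδ u₀ : H) (u : ℝ → H) (hu0 : u 0 = u₀)
    (hu : ∀ t : ℝ, HasDerivAt u (-(P (A (u t) - fδ))) t) :
    ∀ t : ℝ, 0 ≤ t →
      A (u t) - fδ = NormedSpace.exp (-(t • (A ∘L P))) (A u₀ - fδ) := by
  intro t _
  rw [← hu0]
  exact eq_exp_neg_smul_apply_of_hasDerivAt_neg (fun s => hasDerivAt_residual (hu s)) t
end

section
/- Let T be a compact self-adjoint nonnegative operator with eigenpairs (λ_j, φ_j), λ_j > 0, and let w₀ = ∑_j w_{0j} φ_j satisfy ∑_j |w_{0j}|² λ_j^{-2} < ∞. Then S(t) := ∑_j λ_j e^{-2λ_j t} |w_{0j}|² = o(1/t²) as t → ∞. -/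
/-!
Writing `λ e^{-2λt} w² = (λt)³ e^{-2λt} · t⁻³ · w²/λ²` and using `y³ e^{-2y} ≤ 3!/2³` for
`y ≥ 0` (from `(2y)³/3! ≤ e^{2y}`), every term of `S(t)` is at most `(3/4) t⁻³ w²/λ²`. Hence
`S(t) ≤ (3/4) t⁻³ ∑ w_j²/λ_j²`, so `S(t) = O(t⁻³)`, which is `o(t⁻²)`.
-/

open Real Filter Asymptotics Nat

theorem pow_mul_exp_neg_mul_le (n : ℕ) {a y : ℝ} (ha : 0 < a) (hy : 0 ≤ y) :
    y ^ n * exp (-(a * y)) ≤ n ! / a ^ n := by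
  have h := pow_div_factorial_le_exp (a * y) (mul_nonneg ha.le hy) n
  rw [exp_neg, ← div_eq_mul_inv, div_le_div_iff₀ (exp_pos _) (by positivity)]
  rw [div_le_iff₀ (by positivity), mul_pow] at h
  linarith

theorem one_div_pow_isLittleO_one_div_pow {m n : ℕ} (hmn : m < n) :
    (fun t : ℝ => 1 / t ^ n) =o[atTop] fun t => 1 / t ^ m := by
  simp only [one_div]
  exact (isLittleO_pow_pow_atTop_of_lt hmn).inv_rev
    (by filter_upwards [eventually_gt_atTop 0] with t ht h using absurd h (by positivity))

theorem mul_exp_neg_two_mul_mul_sq_le {l t : ℝ} (w : ℝ) (hl : 0 ≤ l) (ht : 0 < t) :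
    l * exp (-2 * l * t) * w ^ 2 ≤ 3 / 4 / t ^ 3 * (w ^ 2 / l ^ 2) := by
  rcases hl.eq_or_lt with rfl | hl
  · simp
  have h : (l * t) ^ 3 * exp (-(2 * (l * t))) ≤ 3 / 4 := by
    convert pow_mul_exp_neg_mul_le 3 two_pos (mul_nonneg hl.le ht.le) using 1
    norm_num [factorial]
  calc l * exp (-2 * l * t) * w ^ 2
      = (l * t) ^ 3 * exp (-(2 * (l * t))) / t ^ 3 * (w ^ 2 / l ^ 2) := by
        field_simp
    _ ≤ 3 / 4 / t ^ 3 * (w ^ 2 / l ^ 2) := by gcongr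

theorem tsum_mul_exp_neg_two_mul_mul_sq_isBigO {ι : Type*} (lam w : ι → ℝ)
    (hlam : ∀ j, 0 ≤ lam j) (hsum : Summable fun j => w j ^ 2 / lam j ^ 2) :
    (fun t : ℝ => ∑' j, lam j * exp (-2 * lam j * t) * w j ^ 2) =O[atTop]
      fun t => 1 / t ^ 3 := by
  refine .of_bound (3 / 4 * ∑' j, w j ^ 2 / lam j ^ 2) ?_
  filter_upwards [eventually_gt_atTop 0] with t ht
  have hle := fun j => mul_exp_neg_two_mul_mul_sq_le (w j) (hlam j) ht
  have hnonneg : ∀ j, 0 ≤ lam j * exp (-2 * lam j * t) * w j ^ 2 := fun j => by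
    have := hlam j; positivity
  have hbound : Summable fun j => 3 / 4 / t ^ 3 * (w j ^ 2 / lam j ^ 2) := hsum.mul_left _
  rw [norm_of_nonneg (tsum_nonneg hnonneg), norm_of_nonneg (by positivity)]
  calc ∑' j, lam j * exp (-2 * lam j * t) * w j ^ 2
      ≤ ∑' j, 3 / 4 / t ^ 3 * (w j ^ 2 / lam j ^ 2) :=
        (hbound.of_nonneg_of_le hnonneg hle).tsum_le_tsum hle hbound
    _ = 3 / 4 * (∑' j, w j ^ 2 / lam j ^ 2) * (1 / t ^ 3) := by
        rw [tsum_mul_left]; ring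

theorem stmt12_general (lam w : ℕ → ℝ) (hlam : ∀ j, 0 < lam j)
    (hsum : Summable (fun j => (w j) ^ 2 / (lam j) ^ 2)) :
    (fun t : ℝ => ∑' j, lam j * Real.exp (-2 * lam j * t) * (w j) ^ 2)
      =o[Filter.atTop] (fun t : ℝ => 1 / t ^ 2) :=
  (tsum_mul_exp_neg_two_mul_mul_sq_isBigO lam w (fun j => (hlam j).le) hsum).trans_isLittleO
    (one_div_pow_isLittleO_one_div_pow (by norm_num))

/-- Let `(λ_j)` be the positive eigenvalues (tending to `0`, as for a compact self-adjoint
nonnegative operator) and `(w_j)` the Fourier coefficients of `w₀` with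
`∑ w_j² / λ_j² < ∞`. Then `S(t) := ∑ λ_j e^{-2λ_j t} w_j² = o(1/t²)` as `t → ∞`. -/
theorem stmt12 (lam w : ℕ → ℝ) (hlam : ∀ j, 0 < lam j)
    (hlam0 : Filter.Tendsto lam Filter.atTop (nhds 0))
    (hsum : Summable (fun j => (w j) ^ 2 / (lam j) ^ 2)) :
    (fun t : ℝ => ∑' j, lam j * Real.exp (-2 * lam j * t) * (w j) ^ 2)
      =o[Filter.atTop] (fun t : ℝ => 1 / t ^ 2) :=
  stmt12_general lam w hlam hsum
end

section
/- Under the hypotheses: A bounded with finite-rank T := PA = T* ≥ 0, Q := AP = Q* ≥ 0, ‖Au₀ - f_δ‖ > Cδ with C ∈ (1,2), and ‖f_δ - f‖ ≤ δ where Ay = f, the equation ‖Au_δ(t) - f_δ‖ = Cδ has a unique solution t_δ ∈ (0, ∞), where u_δ(t) solves u_δ' = -P(Au_δ - f_δ), u_δ(0) = u₀. -/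
/-!
Put `v(t) = A u(t) - f_δ`, so that `v' = -Q v`. Along this flow `‖v‖²` has derivative
`-2⟪Q v, v⟫ ≤ 0`, and the Lyapunov function `⟪Q v, v⟫ + 2t ‖Q v‖²` is nonincreasing for `t ≥ 0`,
whence `‖Q v(t)‖ → 0`. Since `ker PA = ker A`, the range `R` of `A` is isomorphic to that of `PA`,
hence finite-dimensional; `Q` is injective on `R` and vanishes on `Rᗮ = ker A*`. Splitting `v(t)`
along `R ⊕ Rᗮ` gives `‖v(t)‖ ≤ ‖f_δ - f‖ + c ‖Q v(t)‖`, so `‖v(t)‖` eventually drops below `Cδ`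
and the intermediate value theorem yields a crossing time. Two crossing times would make `‖v‖`
constant between them, forcing `⟪Q v, v⟫ = 0`, hence `Q v = 0`, at some time `m`; the bound then
gives `‖v(m)‖ ≤ δ < Cδ`, a contradiction.
-/

open Filter Topology
open scoped RealInnerProductSpace

theorem LinearMap.finite_range_of_ker_eq {R M N N' : Type*} [Ring R] [AddCommGroup M] [Module R M]
    [AddCommGroup N] [Module R N] [AddCommGroup N'] [Module R N'] {f : M →ₗ[R] N}
    {g : M →ₗ[R] N'} (h : LinearMap.ker f = LinearMap.ker g) [Module.Finite R (LinearMap.range f)] :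
    Module.Finite R (LinearMap.range g) :=
  Module.Finite.equiv
    ((f.quotKerEquivRange.symm.trans (Submodule.quotEquivOfEq _ _ h)).trans g.quotKerEquivRange)

section InnerProductSpace

variable {𝕜 E F : Type*} [RCLike 𝕜] [NormedAddCommGroup E] [InnerProductSpace 𝕜 E]
  [NormedAddCommGroup F] [InnerProductSpace 𝕜 F]

namespace Submodule

theorem exists_norm_add_le_norm_add_mul_norm_map {G : Type*} [NormedAddCommGroup G]
    [NormedSpace 𝕜 G] {R : Submodule 𝕜 E} [FiniteDimensional 𝕜 R] {Q : E →ₗ[𝕜] G}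
    (hinj : Disjoint R (LinearMap.ker Q)) (horth : Rᗮ ≤ LinearMap.ker Q) :
    ∃ c : ℝ, ∀ r ∈ R, ∀ e : E, ‖r + e‖ ≤ ‖e‖ + c * ‖Q (r + e)‖ := by
  obtain ⟨c, -, hc⟩ := (Q.domRestrict R).exists_antilipschitzWith <| by
    rw [LinearMap.ker_eq_bot']
    rintro ⟨x, hx⟩ hQx
    exact Subtype.ext ((disjoint_def.mp hinj) x hx hQx)
  refine ⟨c, fun r hr e => ?_⟩
  set p := R.starProjection e
  have hQ : Q (r + e) = Q (r + p) := by
    have : Q (e - p) = 0 := horth (R.sub_starProjection_mem_orthogonal e)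
    rw [map_sub, sub_eq_zero] at this
    rw [map_add, map_add, this]
  have hR : ‖r + p‖ ≤ c * ‖Q (r + p)‖ := ZeroHomClass.bound_of_antilipschitz _ hc
    (⟨r + p, R.add_mem hr (R.starProjection_apply_mem e)⟩ : R)
  have hperp : ‖e - p‖ ≤ ‖e‖ := by
    rw [← starProjection_orthogonal_val]
    exact Rᗮ.norm_starProjection_apply_le e
  calc ‖r + e‖ = ‖(r + p) + (e - p)‖ := by rw [add_add_sub_cancel]
    _ ≤ ‖r + p‖ + ‖e - p‖ := norm_add_le _ _
    _ ≤ ‖e‖ + c * ‖Q (r + e)‖ := by rw [hQ]; linarith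

end Submodule

namespace ContinuousLinearMap

variable [CompleteSpace E]

theorem orthogonal_range_le_ker_comp [CompleteSpace F] {A : E →L[𝕜] F} {P : F →L[𝕜] E}
    (hQ : IsSelfAdjoint (A ∘L P)) : A.rangeᗮ ≤ (A ∘L P).ker := by
  intro k hk
  rw [orthogonal_range] at hk
  have hk' : adjoint A k = 0 := hk
  rw [LinearMap.mem_ker, ← hQ.adjoint_eq, adjoint_comp, coe_coe, comp_apply, hk', map_zero]

theorem disjoint_range_ker_comp {A : E →L[𝕜] F} {P : F →L[𝕜] E}
    (hT : IsSelfAdjoint (P ∘L A)) (hker : (P ∘L A).ker = A.ker) :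
    Disjoint A.range ((A ∘L P).ker) := by
  rw [Submodule.disjoint_def]
  rintro _ ⟨z, rfl⟩ hz
  have hTTz : z ∈ (adjoint (P ∘L A) ∘L (P ∘L A)).ker := by
    simpa [hT.adjoint_eq] using congrArg P hz
  rwa [ker_adjoint_comp_self, hker] at hTTz

end ContinuousLinearMap

end InnerProductSpace

namespace ContinuousLinearMap

variable {H : Type*} [NormedAddCommGroup H] [InnerProductSpace ℝ H] {Q : H →L[ℝ] H} {v : ℝ → H}

theorem IsPositive.apply_eq_zero_of_inner_eq_zero (hQ : Q.IsPositive) {x : H}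
    (hx : ⟪Q x, x⟫ = 0) : Q x = 0 := by
  have hquad : ∀ s : ℝ, 0 ≤ ⟪Q (Q x), Q x⟫ * (s * s) + 2 * ‖Q x‖ ^ 2 * s + 0 := by
    intro s
    have h := hQ.inner_nonneg_left (x + s • Q x)
    have hsym : ⟪Q (Q x), x⟫ = ‖Q x‖ ^ 2 := by
      rw [hQ.inner_left_eq_inner_right, real_inner_self_eq_norm_sq]
    simp only [map_add, map_smul, inner_add_left, inner_add_right, real_inner_smul_left,
      real_inner_smul_right, hx, hsym, real_inner_self_eq_norm_sq] at h
    linarith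
  have h := discrim_le_zero hquad
  rw [discrim, mul_zero, sub_zero] at h
  simpa using le_antisymm h (sq_nonneg _)

theorem hasDerivAt_norm_sq_of_hasDerivAt_neg_apply (hv : ∀ t, HasDerivAt v (-Q (v t)) t)
    (t : ℝ) : HasDerivAt (fun t => ‖v t‖ ^ 2) (-(2 * ⟪Q (v t), v t⟫)) t := by
  simpa [inner_neg_right, real_inner_comm] using (hv t).norm_sq

theorem hasDerivAt_apply_of_hasDerivAt_neg_apply (hv : ∀ t, HasDerivAt v (-Q (v t)) t)
    (t : ℝ) : HasDerivAt (fun t => Q (v t)) (-Q (Q (v t))) t := by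
  have h := Q.hasFDerivAt.comp_hasDerivAt t (hv t)
  rwa [map_neg] at h

namespace IsPositive

theorem antitone_norm_of_hasDerivAt (hQ : Q.IsPositive) (hv : ∀ t, HasDerivAt v (-Q (v t)) t) :
    Antitone fun t => ‖v t‖ := by
  have hsq : Antitone fun t => ‖v t‖ ^ 2 :=
    antitone_of_hasDerivAt_nonpos (hasDerivAt_norm_sq_of_hasDerivAt_neg_apply hv)
      fun t => neg_nonpos.mpr (mul_nonneg zero_le_two (hQ.inner_nonneg_left (v t)))
  exact fun s t hst =>
    (pow_le_pow_iff_left₀ (norm_nonneg _) (norm_nonneg _) two_ne_zero).mp (hsq hst)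

theorem hasDerivAt_inner_apply_self (hQ : Q.IsPositive) (hv : ∀ t, HasDerivAt v (-Q (v t)) t)
    (t : ℝ) : HasDerivAt (fun t => ⟪Q (v t), v t⟫) (-(2 * ‖Q (v t)‖ ^ 2)) t := by
  refine ((hasDerivAt_apply_of_hasDerivAt_neg_apply hv t).inner ℝ (hv t)).congr_deriv ?_
  rw [inner_neg_left, inner_neg_right, hQ.inner_left_eq_inner_right (Q (v t)),
    real_inner_self_eq_norm_sq]
  ring

theorem two_mul_mul_norm_sq_le (hQ : Q.IsPositive) (hv : ∀ t, HasDerivAt v (-Q (v t)) t)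
    {t : ℝ} (ht : 0 ≤ t) : 2 * t * ‖Q (v t)‖ ^ 2 ≤ ⟪Q (v 0), v 0⟫ := by
  set g : ℝ → ℝ := fun s => ⟪Q (v s), v s⟫ + 2 * s * ‖Q (v s)‖ ^ 2
  have hg : ∀ s, HasDerivAt g (-(4 * s * ⟪Q (Q (v s)), Q (v s)⟫)) s := fun s => by
    refine ((hQ.hasDerivAt_inner_apply_self hv s).add
      (((hasDerivAt_id s).const_mul 2).mul
        (hasDerivAt_norm_sq_of_hasDerivAt_neg_apply
          (hasDerivAt_apply_of_hasDerivAt_neg_apply hv) s))).congr_deriv ?_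
    simp only [id]
    ring
  have hanti : AntitoneOn g (Set.Ici 0) := by
    refine antitoneOn_of_hasDerivWithinAt_nonpos (convex_Ici 0)
      (fun s _ => (hg s).continuousAt.continuousWithinAt) (fun s _ => (hg s).hasDerivWithinAt)
      fun s hs => ?_
    rw [interior_Ici] at hs
    have := hQ.inner_nonneg_left (Q (v s))
    have : (0 : ℝ) < s := hs
    nlinarith
  have := hanti Set.self_mem_Ici ht ht
  simp only [g, mul_zero, zero_mul, add_zero] at this
  linarith [hQ.inner_nonneg_left (v t)]

theorem tendsto_norm_apply_atTop (hQ : Q.IsPositive) (hv : ∀ t, HasDerivAt v (-Q (v t)) t) :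
    Tendsto (fun t => ‖Q (v t)‖) atTop (𝓝 0) := by
  have hsq : Tendsto (fun t => ‖Q (v t)‖ ^ 2) atTop (𝓝 0) := by
    refine squeeze_zero' (g := fun t => ⟪Q (v 0), v 0⟫ / (2 * t))
      (Eventually.of_forall fun t => sq_nonneg _) ?_
      (tendsto_const_nhds.div_atTop (tendsto_id.const_mul_atTop two_pos))
    filter_upwards [eventually_gt_atTop 0] with t ht
    rw [le_div_iff₀ (by positivity), mul_comm]
    exact hQ.two_mul_mul_norm_sq_le hv ht.le
  simpa using hsq.sqrt

theorem existsUnique_pos_norm_eq (hQ : Q.IsPositive) (hv : ∀ t, HasDerivAt v (-Q (v t)) t)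
    {δ c r : ℝ} (hbound : ∀ t, ‖v t‖ ≤ δ + c * ‖Q (v t)‖) (hδr : δ < r) (hr : r < ‖v 0‖) :
    ∃! t, 0 < t ∧ ‖v t‖ = r := by
  have hcont : Continuous fun t => ‖v t‖ :=
    (continuous_iff_continuousAt.2 fun t => (hv t).continuousAt).norm
  have hanti := hQ.antitone_norm_of_hasDerivAt hv
  obtain ⟨T, hT, hT0⟩ : ∃ T, ‖v T‖ < r ∧ 0 ≤ T := by
    have hlim : Tendsto (fun t => δ + c * ‖Q (v t)‖) atTop (𝓝 δ) := by
      simpa using ((hQ.tendsto_norm_apply_atTop hv).const_mul c).const_add δ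
    exact ((hlim.eventually (gt_mem_nhds hδr)).and (eventually_ge_atTop 0)).exists.imp
      fun t ht => ⟨(hbound t).trans_lt ht.1, ht.2⟩
  obtain ⟨t, ⟨ht0, -⟩, ht⟩ := intermediate_value_Ioo' hT0 hcont.continuousOn ⟨hT, hr⟩
  have hcross : ∀ t₁ t₂, t₁ < t₂ → ‖v t₁‖ = r → ‖v t₂‖ = r → False := by
    intro t₁ t₂ h12 h1 h2
    have hconst : ∀ s ∈ Set.Icc t₁ t₂, ‖v s‖ = r := fun s hs =>
      le_antisymm (h1 ▸ hanti hs.1) (h2 ▸ hanti hs.2)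
    obtain ⟨m, hm₁, hm₂⟩ := exists_between h12
    have hm : m ∈ Set.Icc t₁ t₂ := ⟨hm₁.le, hm₂.le⟩
    have hmin : IsLocalMin (fun t => ‖v t‖ ^ 2) m := by
      filter_upwards [Icc_mem_nhds hm₁ hm₂] with s hs
      rw [hconst s hs, hconst m hm]
    have hQm : Q (v m) = 0 := hQ.apply_eq_zero_of_inner_eq_zero <| by
      linarith [hmin.hasDerivAt_eq_zero (hasDerivAt_norm_sq_of_hasDerivAt_neg_apply hv m)]
    have := hbound m
    rw [hQm, norm_zero, mul_zero, add_zero, hconst m hm] at this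
    linarith
  refine ⟨t, ⟨ht0, ht⟩, fun s ⟨_, hs⟩ => ?_⟩
  rcases lt_trichotomy s t with h | h | h
  · exact (hcross s t h hs ht).elim
  · exact h
  · exact (hcross t s h ht hs).elim

end IsPositive

end ContinuousLinearMap

theorem stmt13_general {H : Type*} [NormedAddCommGroup H] [InnerProductSpace ℝ H] [CompleteSpace H]
    (A P : H →L[ℝ] H)
    (hsaT : IsSelfAdjoint (P ∘L A))
    (hsaQ : IsSelfAdjoint (A ∘L P)) (hposQ : ∀ x : H, 0 ≤ (inner ℝ ((A ∘L P) x) x : ℝ))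
    (hfr : FiniteDimensional ℝ (LinearMap.range ((P ∘L A : H →L[ℝ] H) : H →ₗ[ℝ] H)))
    (hker : LinearMap.ker ((P ∘L A : H →L[ℝ] H) : H →ₗ[ℝ] H) = LinearMap.ker (A : H →ₗ[ℝ] H))
    (f y u₀ fδ : H) (hy : A y = f) (δ C : ℝ) (hδ : 0 < δ) (hC : C ∈ Set.Ioo (1:ℝ) 2)
    (hfδ : ‖fδ - f‖ ≤ δ) (hinit : C * δ < ‖A u₀ - fδ‖)
    (u : ℝ → H) (hu0 : u 0 = u₀)
    (hu : ∀ t : ℝ, HasDerivAt u (-(P (A (u t) - fδ))) t) :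
    ∃! t : ℝ, 0 < t ∧ ‖A (u t) - fδ‖ = C * δ := by
  have hQ : (A ∘L P).IsPositive := (A ∘L P).isPositive_iff' |>.mpr ⟨hsaQ, hposQ⟩
  have : FiniteDimensional ℝ A.range := LinearMap.finite_range_of_ker_eq hker
  obtain ⟨c, hc⟩ := Submodule.exists_norm_add_le_norm_add_mul_norm_map
    (ContinuousLinearMap.disjoint_range_ker_comp hsaT hker)
    (ContinuousLinearMap.orthogonal_range_le_ker_comp hsaQ)
  have hv : ∀ t, HasDerivAt (fun t => A (u t) - fδ) (-(A ∘L P) (A (u t) - fδ)) t := fun t => by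
    have h := (A.hasFDerivAt.comp_hasDerivAt t (hu t)).sub_const fδ
    rwa [map_neg] at h
  refine hQ.existsUnique_pos_norm_eq (δ := δ) (c := c) hv (fun t => ?_)
    (by nlinarith [hC.1]) (by rwa [hu0])
  have h := hc (A (u t - y)) ⟨_, rfl⟩ (f - fδ)
  rw [map_sub, hy, sub_add_sub_cancel, norm_sub_rev f, ContinuousLinearMap.coe_coe] at h
  linarith

/-- Discrepancy principle for the DSM: under the stated hypotheses the equation
`‖Au_δ(t) - f_δ‖ = Cδ` has a unique positive solution `t_δ`. -/
theorem stmt13 {H : Type*} [NormedAddCommGroup H] [InnerProductSpace ℝ H] [CompleteSpace H]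
    (A P : H →L[ℝ] H)
    (hsaT : IsSelfAdjoint (P ∘L A)) (hposT : ∀ x : H, 0 ≤ (inner ℝ ((P ∘L A) x) x : ℝ))
    (hsaQ : IsSelfAdjoint (A ∘L P)) (hposQ : ∀ x : H, 0 ≤ (inner ℝ ((A ∘L P) x) x : ℝ))
    (hfr : FiniteDimensional ℝ (LinearMap.range ((P ∘L A : H →L[ℝ] H) : H →ₗ[ℝ] H)))
    (hker : LinearMap.ker ((P ∘L A : H →L[ℝ] H) : H →ₗ[ℝ] H) = LinearMap.ker (A : H →ₗ[ℝ] H))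
    (f y u₀ fδ : H) (hy : A y = f) (δ C : ℝ) (hδ : 0 < δ) (hC : C ∈ Set.Ioo (1:ℝ) 2)
    (hfδ : ‖fδ - f‖ ≤ δ) (hinit : C * δ < ‖A u₀ - fδ‖)
    (u : ℝ → H) (hu0 : u 0 = u₀)
    (hu : ∀ t : ℝ, HasDerivAt u (-(P (A (u t) - fδ))) t) :
    ∃! t : ℝ, 0 < t ∧ ‖A (u t) - fδ‖ = C * δ :=
  stmt13_general A P hsaT hsaQ hposQ hfr hker f y u₀ fδ hy δ C hδ hC hfδ hinit u hu0 hu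
end

section
/- Let T be bounded self-adjoint nonnegative with h‖T‖ < 2, h > 0, and w₀ ⟂ N(T). Then ‖(I - hT)^n w₀‖ → 0 as n → ∞. -/
/-!
Put `S = 1 - h • T`. Positivity gives `‖T x‖² ≤ ‖T‖ ⟪T x, x⟫`, hence
`‖x‖² - ‖S x‖² ≥ h (2 - h ‖T‖) ⟪T x, x⟫ ≥ 0`: `S` is a self-adjoint contraction, and
`‖S x‖ = ‖x‖` forces `T x = 0`. For a self-adjoint contraction `⟪S²ⁿx, S²ᵐx⟫ = ‖Sⁿ⁺ᵐx‖²`, and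
since `‖Sᵏx‖` decreases, `(S²ⁿx)` is Cauchy; its limit `v` satisfies
`‖S v‖ = ‖v‖ = lim ‖Sⁿx‖`. So `T v = 0`, while `v ∈ (ker T)ᗮ` because `S` fixes `ker T` and the
iterates of `w₀` stay in that closed subspace. Thus `v = 0`.
-/

open Filter Topology

section SelfAdjointContraction

variable {𝕜 H : Type*} [RCLike 𝕜] [NormedAddCommGroup H] [InnerProductSpace 𝕜 H]
  {S : H →L[𝕜] H}

local notation "⟪" x ", " y "⟫" => inner 𝕜 x y

lemma ContinuousLinearMap.antitone_norm_pow_apply (hS : ∀ x, ‖S x‖ ≤ ‖x‖) (x : H) :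
    Antitone fun n => ‖(S ^ n) x‖ :=
  antitone_nat_of_succ_le fun n => by
    rw [pow_succ', mul_apply_eq_comp]
    exact hS _

variable [CompleteSpace H]

lemma IsSelfAdjoint.inner_pow_apply_pow_apply (hS : IsSelfAdjoint S) (a b : ℕ) (x : H) :
    ⟪(S ^ a) x, (S ^ b) x⟫ = ⟪(S ^ (b + a)) x, x⟫ := by
  rw [← (hS.pow b).isSymmetric.apply_clm, pow_add, mul_apply_eq_comp]

lemma IsSelfAdjoint.norm_sub_pow_two_mul_apply_sq (hS : IsSelfAdjoint S) (n m : ℕ) (x : H) :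
    ‖(S ^ (2 * n)) x - (S ^ (2 * m)) x‖ ^ 2
      = ‖(S ^ (2 * n)) x‖ ^ 2 - 2 * ‖(S ^ (n + m)) x‖ ^ 2 + ‖(S ^ (2 * m)) x‖ ^ 2 := by
  have hsq (k : ℕ) : ‖(S ^ k) x‖ ^ 2 = RCLike.re ⟪(S ^ (k + k)) x, x⟫ := by
    rw [← hS.inner_pow_apply_pow_apply, inner_self_eq_norm_sq]
  rw [norm_sub_sq (𝕜 := 𝕜), hS.inner_pow_apply_pow_apply, hsq (n + m)]
  ring_nf

lemma IsSelfAdjoint.cauchySeq_pow_two_mul_apply (hS : IsSelfAdjoint S) (hS₁ : ∀ x, ‖S x‖ ≤ ‖x‖)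
    (x : H) : CauchySeq fun n => (S ^ (2 * n)) x := by
  set d : ℕ → ℝ := fun k => ‖(S ^ k) x‖ ^ 2
  have hd : Antitone d := fun a b hab =>
    pow_le_pow_left₀ (norm_nonneg _) (ContinuousLinearMap.antitone_norm_pow_apply hS₁ x hab) 2
  have hbdd : BddBelow (Set.range d) := ⟨0, by rintro _ ⟨k, rfl⟩; positivity⟩
  set L := ⨅ k, d k
  refine cauchySeq_of_le_tendsto_0 (fun N => √(2 * (d N - L))) (fun n m N hn hm => ?_) ?_
  · rw [dist_eq_norm, ← Real.sqrt_sq (norm_nonneg _), hS.norm_sub_pow_two_mul_apply_sq]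
    have h₁ := hd (show N ≤ 2 * n by omega)
    have h₂ := hd (show N ≤ 2 * m by omega)
    have h₃ := ciInf_le hbdd (n + m)
    exact Real.sqrt_le_sqrt (by linarith)
  · simpa [L] using (((tendsto_atTop_ciInf hd hbdd).sub_const L).const_mul 2).sqrt

lemma IsSelfAdjoint.exists_tendsto_pow_two_mul_apply (hS : IsSelfAdjoint S)
    (hS₁ : ∀ x, ‖S x‖ ≤ ‖x‖) (x : H) :
    ∃ v, Tendsto (fun n => (S ^ (2 * n)) x) atTop (𝓝 v) ∧
      Tendsto (fun n => ‖(S ^ n) x‖) atTop (𝓝 ‖v‖) ∧ ‖S v‖ = ‖v‖ := by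
  obtain ⟨v, hv⟩ := cauchySeq_tendsto_of_complete (hS.cauchySeq_pow_two_mul_apply hS₁ x)
  obtain ⟨r, hr⟩ : ∃ r, Tendsto (fun n => ‖(S ^ n) x‖) atTop (𝓝 r) :=
    ⟨_, tendsto_atTop_ciInf (ContinuousLinearMap.antitone_norm_pow_apply hS₁ x)
      ⟨0, by rintro _ ⟨k, rfl⟩; positivity⟩⟩
  have h_even : Tendsto (fun n => 2 * n) atTop atTop := tendsto_id.const_mul_atTop' two_pos
  have hv_norm : ‖v‖ = r := tendsto_nhds_unique hv.norm (hr.comp h_even)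
  have hSv_norm : ‖S v‖ = r := by
    refine tendsto_nhds_unique ((S.continuous.tendsto v).comp hv).norm ?_
    have h_odd := hr.comp ((tendsto_add_atTop_nat 1).comp h_even)
    convert h_odd using 2 with n
    simp only [Function.comp_apply, pow_succ', mul_apply_eq_comp]
  exact ⟨v, hv, hv_norm ▸ hr, hSv_norm.trans hv_norm.symm⟩

lemma IsSelfAdjoint.pow_apply_mem_orthogonal (hS : IsSelfAdjoint S) {K : Submodule 𝕜 H}
    (hK : ∀ k ∈ K, S k = k) {x : H} (hx : x ∈ Kᗮ) (n : ℕ) : (S ^ n) x ∈ Kᗮ := by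
  intro k hk
  rw [← (hS.pow n).isSymmetric.apply_clm, pow_apply_eq_iterate,
    Function.iterate_fixed (hK k hk)]
  exact hx k hk

end SelfAdjointContraction

section PositiveOperator

variable {H : Type*} [NormedAddCommGroup H] [InnerProductSpace ℝ H] {T : H →L[ℝ] H}

open scoped RealInnerProductSpace

/-- Cauchy–Schwarz for the form `⟪x, T y⟫`, applied to `x` and `T x`, gives
`‖T x‖⁴ ≤ ⟪T x, x⟫ ⟪T (T x), T x⟫ ≤ ⟪T x, x⟫ ‖T‖ ‖T x‖²`. -/
lemma ContinuousLinearMap.IsPositive.norm_apply_sq_le (hT : T.IsPositive) (x : H) :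
    ‖T x‖ ^ 2 ≤ ‖T‖ * ⟪T x, x⟫ := by
  have hCS := LinearMap.BilinForm.apply_mul_apply_le_of_forall_zero_le
    ((innerₗ H).compl₂ (T : H →ₗ[ℝ] H)) hT.inner_nonneg_right x (T x)
  simp only [LinearMap.compl₂_apply, innerₗ_apply_apply, ContinuousLinearMap.coe_coe] at hCS
  rw [← hT.isSymmetric.apply_clm, real_inner_self_eq_norm_sq, real_inner_comm (T x) x] at hCS
  have hTT : ⟪T x, T (T x)⟫ ≤ ‖T‖ * ‖T x‖ ^ 2 := by
    calc ⟪T x, T (T x)⟫ ≤ ‖T x‖ * ‖T (T x)‖ := real_inner_le_norm _ _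
      _ ≤ ‖T x‖ * (‖T‖ * ‖T x‖) := by gcongr; exact T.le_opNorm _
      _ = ‖T‖ * ‖T x‖ ^ 2 := by ring
  rcases (sq_nonneg ‖T x‖).eq_or_lt with h0 | hTx_pos
  · rw [← h0]; exact mul_nonneg (norm_nonneg T) (hT.inner_nonneg_left x)
  · nlinarith [mul_le_mul_of_nonneg_left hTT (hT.inner_nonneg_left x)]

lemma ContinuousLinearMap.IsPositive.norm_one_sub_smul_apply_sq_add_le (hT : T.IsPositive)
    {h : ℝ} (hh : 0 ≤ h) (x : H) :
    ‖(1 - h • T) x‖ ^ 2 + h * (2 - h * ‖T‖) * ⟪T x, x⟫ ≤ ‖x‖ ^ 2 := by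
  have hexpand : ‖(1 - h • T) x‖ ^ 2 = ‖x‖ ^ 2 - 2 * h * ⟪T x, x⟫ + h ^ 2 * ‖T x‖ ^ 2 := by
    rw [sub_apply, one_apply_eq_self, smul_apply, norm_sub_sq_real, real_inner_smul_right,
      norm_smul, Real.norm_of_nonneg hh, real_inner_comm]
    ring
  nlinarith [mul_le_mul_of_nonneg_left (hT.norm_apply_sq_le x) (sq_nonneg h)]

lemma ContinuousLinearMap.IsPositive.norm_one_sub_smul_apply_le (hT : T.IsPositive)
    {h : ℝ} (hh : 0 ≤ h) (hhT : h * ‖T‖ ≤ 2) (x : H) : ‖(1 - h • T) x‖ ≤ ‖x‖ := by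
  have hle := hT.norm_one_sub_smul_apply_sq_add_le hh x
  have hdefect : 0 ≤ h * (2 - h * ‖T‖) * ⟪T x, x⟫ :=
    mul_nonneg (mul_nonneg hh (by linarith)) (hT.inner_nonneg_left x)
  exact pow_le_pow_iff_left₀ (norm_nonneg _) (norm_nonneg _) two_ne_zero |>.1 (by linarith)

lemma ContinuousLinearMap.IsPositive.apply_eq_zero_of_norm_one_sub_smul_apply_eq
    (hT : T.IsPositive) {h : ℝ} (hh : 0 < h) (hhT : h * ‖T‖ < 2) {x : H}
    (hx : ‖(1 - h • T) x‖ = ‖x‖) : T x = 0 := by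
  have hle := hT.norm_one_sub_smul_apply_sq_add_le hh.le x
  rw [hx] at hle
  have hTxx : ⟪T x, x⟫ = 0 :=
    le_antisymm (nonpos_of_mul_nonpos_right (by linarith : h * (2 - h * ‖T‖) * ⟪T x, x⟫ ≤ 0)
      (mul_pos hh (by linarith))) (hT.inner_nonneg_left x)
  have hTx := hT.norm_apply_sq_le x
  rw [hTxx, mul_zero] at hTx
  exact norm_eq_zero.1 (pow_eq_zero_iff two_ne_zero |>.1 (le_antisymm hTx (sq_nonneg _)))

end PositiveOperator

/-- Let `T` be bounded self-adjoint nonnegative with `h‖T‖ < 2`, `h > 0`, and `w₀ ⟂ N(T)`.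
Then `‖(I - hT)^n w₀‖ → 0` as `n → ∞`. -/
theorem stmt15 {H : Type*} [NormedAddCommGroup H] [InnerProductSpace ℝ H] [CompleteSpace H]
    (T : H →L[ℝ] H) (hsa : IsSelfAdjoint T) (hpos : ∀ x : H, 0 ≤ (inner ℝ (T x) x : ℝ))
    (h : ℝ) (hh : 0 < h) (hT : h * ‖T‖ < 2)
    (w₀ : H) (horth : w₀ ∈ (LinearMap.ker (T : H →ₗ[ℝ] H))ᗮ) :
    Filter.Tendsto (fun n : ℕ => ‖((1 - h • T) ^ n) w₀‖) Filter.atTop (nhds 0) := by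
  have hT_pos : T.IsPositive := (T.isPositive_iff').2 ⟨hsa, hpos⟩
  have hS : IsSelfAdjoint (1 - h • T) :=
    (IsSelfAdjoint.one _).sub ((IsSelfAdjoint.all h).smul hsa)
  obtain ⟨v, hv, hnorm, hSv⟩ :=
    hS.exists_tendsto_pow_two_mul_apply (hT_pos.norm_one_sub_smul_apply_le hh.le hT.le) w₀
  have hv_ker : T v = 0 := hT_pos.apply_eq_zero_of_norm_one_sub_smul_apply_eq hh hT hSv
  have hv_perp : v ∈ (LinearMap.ker (T : H →ₗ[ℝ] H))ᗮ :=
    (Submodule.isClosed_orthogonal _).mem_of_tendsto hv <| .of_forall fun n =>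
      hS.pow_apply_mem_orthogonal (fun k hk => by simp [show T k = 0 from hk]) horth _
  have hv_zero : v = 0 :=
    inner_self_eq_zero.1 (Submodule.inner_right_of_mem_orthogonal hv_ker hv_perp)
  simpa [hv_zero] using hnorm
end

section
/- Let A, P be bounded with T := PA = T* ≥ 0, h‖T‖ < 2, N(T) = N(A), Ay = f, u₀ - y ⟂ N(A), ‖f_δ - f‖ ≤ δ. Define u_{n+1} = u_n - hP(Au_n - f_δ), starting from u₀. If n_δ h → ∞ and n_δ h δ → 0 as δ → 0, then ‖u_{n_δ} - y‖ → 0. -/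
/-!
Write `T = PA` and `B = 1 - hT`. The error `w_n = u_n - y` obeys `w_{n+1} = B w_n + h P (f_δ - f)`.
Cauchy–Schwarz for the nonnegative form `⟪T·, ·⟫` gives `‖Tx‖² ≤ ‖T‖⟪Tx, x⟫`, hence
`‖Bx‖² ≤ ‖x‖² - h(2 - h‖T‖)⟪Tx, x⟫`. So `B` is a contraction, which yields
`‖w_n - Bⁿ w₀‖ ≤ n h ‖P‖ δ`, and `‖Bⁿ v‖²` decreases by at least a fixed multiple of
`‖T Bⁿ v‖²`, which therefore tends to `0`. Thus `Bⁿ → 0` pointwise on the range of `T`, and, the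
`Bⁿ` being equicontinuous, on its closure `(ker T)ᗮ = (ker A)ᗮ`, which contains `w₀`.
-/
open Filter Topology
open scoped RealInnerProductSpace

namespace ContinuousLinearMap

section Positive

variable {H : Type*} [NormedAddCommGroup H] [InnerProductSpace ℝ H] {T : H →L[ℝ] H}

theorem IsPositive.inner_apply_sq_le_mul (hT : T.IsPositive) (x y : H) :
    ⟪T x, y⟫ ^ 2 ≤ ⟪T x, x⟫ * ⟪T y, y⟫ := by
  have hquad : ∀ t : ℝ, 0 ≤ ⟪T y, y⟫ * (t * t) + 2 * ⟪T x, y⟫ * t + ⟪T x, x⟫ := by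
    intro t
    have hsymm : ⟪T y, x⟫ = ⟪T x, y⟫ := by
      rw [hT.inner_left_eq_inner_right, real_inner_comm]
    have := hT.inner_nonneg_left (x + t • y)
    simp only [map_add, map_smul, inner_add_left, inner_add_right, real_inner_smul_left,
      real_inner_smul_right, hsymm] at this
    linarith
  have hdisc := discrim_le_zero hquad
  rw [discrim] at hdisc
  nlinarith

theorem IsPositive.norm_apply_sq_le_s16 (hT : T.IsPositive) (x : H) :
    ‖T x‖ ^ 2 ≤ ‖T‖ * ⟪T x, x⟫ := by
  rcases (norm_nonneg (T x)).eq_or_lt with hTx | hTx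
  · rw [← hTx]
    simpa using mul_nonneg (norm_nonneg T) (hT.inner_nonneg_left x)
  have hTTx : ⟪T (T x), T x⟫ ≤ ‖T‖ * ‖T x‖ ^ 2 :=
    calc ⟪T (T x), T x⟫ ≤ ‖T (T x)‖ * ‖T x‖ := real_inner_le_norm _ _
      _ ≤ ‖T‖ * ‖T x‖ * ‖T x‖ := by gcongr; exact T.le_opNorm _
      _ = ‖T‖ * ‖T x‖ ^ 2 := by ring
  have hquart : (‖T x‖ ^ 2) ^ 2 ≤ ‖T‖ * ⟪T x, x⟫ * ‖T x‖ ^ 2 :=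
    calc (‖T x‖ ^ 2) ^ 2 = ⟪T x, T x⟫ ^ 2 := by rw [real_inner_self_eq_norm_sq]
      _ ≤ ⟪T x, x⟫ * ⟪T (T x), T x⟫ := hT.inner_apply_sq_le_mul x (T x)
      _ ≤ ⟪T x, x⟫ * (‖T‖ * ‖T x‖ ^ 2) := by gcongr; exact hT.inner_nonneg_left x
      _ = ‖T‖ * ⟪T x, x⟫ * ‖T x‖ ^ 2 := by ring
  nlinarith [pow_pos hTx 2]

theorem IsPositive.norm_sub_smul_apply_sq_le (hT : T.IsPositive) (h : ℝ) (x : H) :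
    ‖x - h • T x‖ ^ 2 ≤ ‖x‖ ^ 2 - h * (2 - h * ‖T‖) * ⟪T x, x⟫ := by
  rw [norm_sub_sq_real, real_inner_smul_right, real_inner_comm, norm_smul, mul_pow,
    Real.norm_eq_abs, sq_abs]
  nlinarith [hT.norm_apply_sq_le_s16 x, sq_nonneg h]

theorem IsPositive.norm_one_sub_smul_le (hT : T.IsPositive) {h : ℝ} (hh : 0 ≤ h)
    (hhT : h * ‖T‖ ≤ 2) : ‖1 - h • T‖ ≤ 1 := by
  refine opNorm_le_bound _ zero_le_one fun x => ?_
  have hdecr := hT.norm_sub_smul_apply_sq_le h x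
  have hgain : 0 ≤ h * (2 - h * ‖T‖) * ⟪T x, x⟫ :=
    mul_nonneg (mul_nonneg hh (by linarith)) (hT.inner_nonneg_left x)
  simpa using (pow_le_pow_iff_left₀ (norm_nonneg _) (norm_nonneg _) two_ne_zero).1
    (by linarith)

theorem IsPositive.tendsto_apply_pow_apply (hT : T.IsPositive) {h : ℝ} (hh : 0 < h)
    (hhT : h * ‖T‖ < 2) (v : H) :
    Tendsto (fun n => T (((1 - h • T) ^ n : H →L[ℝ] H) v)) atTop (𝓝 0) := by
  set x : ℕ → H := fun n => ((1 - h • T) ^ n : H →L[ℝ] H) v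
  set c := h * (2 - h * ‖T‖)
  have hc : 0 < c := mul_pos hh (by linarith)
  have hdecr : ∀ n, ‖x (n + 1)‖ ^ 2 ≤ ‖x n‖ ^ 2 - c * ⟪T (x n), x n⟫ := fun n => by
    have hsucc : x (n + 1) = x n - h • T (x n) := by
      simp only [x, pow_succ']; rfl
    rw [hsucc]
    exact hT.norm_sub_smul_apply_sq_le h (x n)
  have hanti : Antitone fun n => ‖x n‖ ^ 2 := antitone_nat_of_succ_le fun n => by
    nlinarith [hdecr n, hT.inner_nonneg_left (x n)]
  obtain ⟨a, ha⟩ : ∃ a, Tendsto (fun n => ‖x n‖ ^ 2) atTop (𝓝 a) :=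
    ⟨_, tendsto_atTop_ciInf hanti ⟨0, by rintro _ ⟨n, rfl⟩; positivity⟩⟩
  have hgap : Tendsto (fun n => ‖T‖ / c * (‖x n‖ ^ 2 - ‖x (n + 1)‖ ^ 2)) atTop (𝓝 0) := by
    simpa using ((ha.sub (ha.comp (tendsto_add_atTop_nat 1))).const_mul (‖T‖ / c))
  have hsq : Tendsto (fun n => ‖T (x n)‖ ^ 2) atTop (𝓝 0) := by
    refine squeeze_zero (fun n => by positivity) (fun n => ?_) hgap
    calc ‖T (x n)‖ ^ 2 ≤ ‖T‖ * ⟪T (x n), x n⟫ := hT.norm_apply_sq_le_s16 (x n)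
      _ ≤ ‖T‖ * ((‖x n‖ ^ 2 - ‖x (n + 1)‖ ^ 2) / c) := by
        gcongr; rw [le_div_iff₀ hc]; linarith [hdecr n]
      _ = _ := by ring
  rw [tendsto_zero_iff_norm_tendsto_zero]
  simpa only [Real.sqrt_sq (norm_nonneg _), Real.sqrt_zero] using hsq.sqrt

theorem IsPositive.tendsto_pow_apply_of_mem_orthogonal_ker [CompleteSpace H]
    (hT : T.IsPositive) {h : ℝ} (hh : 0 < h) (hhT : h * ‖T‖ < 2) {w : H}
    (hw : w ∈ (LinearMap.ker (T : H →ₗ[ℝ] H))ᗮ) :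
    Tendsto (fun n => ((1 - h • T) ^ n : H →L[ℝ] H) w) atTop (𝓝 0) := by
  set B : H →L[ℝ] H := 1 - h • T
  have hB : LipschitzWith 1 B :=
    B.lipschitz.weaken (by exact_mod_cast hT.norm_one_sub_smul_le hh.le hhT.le)
  have hclosed : IsClosed {z : H | Tendsto (fun n => (B ^ n) z) atTop (𝓝 0)} := by
    refine (LipschitzWith.uniformEquicontinuous _ 1 fun n => ?_).equicontinuous
      |>.isClosed_setOfPred_tendsto continuous_const
    simpa [FunLike.coe_pow_eq_iterate] using hB.iterate n
  have hrange : Set.range T ⊆ {z : H | Tendsto (fun n => (B ^ n) z) atTop (𝓝 0)} := by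
    rintro _ ⟨v, rfl⟩
    have hcomm : Commute B T := (Commute.one_left T).sub_left ((Commute.refl T).smul_left h)
    have hswap : ∀ n, (B ^ n) (T v) = T ((B ^ n) v) := fun n =>
      congrArg (· v) (hcomm.pow_left n).eq
    simpa only [Set.mem_ofPred_eq, hswap] using hT.tendsto_apply_pow_apply hh hhT v
  rw [orthogonal_ker, hT.isSelfAdjoint.adjoint_eq] at hw
  exact closure_minimal hrange hclosed hw

end Positive

theorem norm_sub_pow_apply_le_of_eq_add {𝕜 E : Type*} [NontriviallyNormedField 𝕜]
    [SeminormedAddCommGroup E] [NormedSpace 𝕜 E] {B : E →L[𝕜] E} (hB : ‖B‖ ≤ 1)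
    {e : ℕ → E} {z : E} (he : ∀ n, e (n + 1) = B (e n) + z) (n : ℕ) :
    ‖e n - (B ^ n) (e 0)‖ ≤ n * ‖z‖ := by
  induction n with
  | zero => simp
  | succ n ih =>
    have hsucc : e (n + 1) - (B ^ (n + 1)) (e 0) = B (e n - (B ^ n) (e 0)) + z := by
      rw [he, pow_succ', mul_apply_eq_comp, map_sub]
      abel
    calc ‖e (n + 1) - (B ^ (n + 1)) (e 0)‖
        ≤ ‖B‖ * ‖e n - (B ^ n) (e 0)‖ + ‖z‖ := by
          rw [hsucc]; exact (norm_add_le _ _).trans (by gcongr; exact B.le_opNorm _)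
      _ ≤ 1 * (n * ‖z‖) + ‖z‖ := by gcongr
      _ = (n + 1 : ℕ) * ‖z‖ := by push_cast; ring

end ContinuousLinearMap

open ContinuousLinearMap

theorem norm_iterate_sub_le_of_perturbed_data {E : Type*} [NormedAddCommGroup E]
    [NormedSpace ℝ E] {A P : E →L[ℝ] E} {h δ : ℝ} (hh : 0 ≤ h)
    (hB : ‖1 - h • (P ∘L A)‖ ≤ 1) {f y fδ : E} (hy : A y = f) (hfδ : ‖fδ - f‖ ≤ δ)
    {u : ℕ → E} (hrec : ∀ n, u (n + 1) = u n - h • P (A (u n) - fδ)) (n : ℕ) :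
    ‖u n - y‖ ≤ ‖((1 - h • (P ∘L A)) ^ n) (u 0 - y)‖ + ‖P‖ * (n * h * δ) := by
  have herr : ∀ n, u (n + 1) - y = (1 - h • (P ∘L A)) (u n - y) + h • P (fδ - f) := by
    intro n
    simp only [hrec n, sub_apply, one_apply_eq_self, smul_apply, comp_apply, map_sub, smul_sub, hy]
    abel
  have hζ : ‖h • P (fδ - f)‖ ≤ h * (‖P‖ * δ) := by
    rw [norm_smul, Real.norm_of_nonneg hh]
    exact mul_le_mul_of_nonneg_left ((P.le_opNorm _).trans (by gcongr)) hh
  calc ‖u n - y‖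
      ≤ ‖((1 - h • (P ∘L A)) ^ n) (u 0 - y)‖
        + ‖u n - y - ((1 - h • (P ∘L A)) ^ n) (u 0 - y)‖ := norm_le_insert' _ _
    _ ≤ ‖((1 - h • (P ∘L A)) ^ n) (u 0 - y)‖ + n * (h * (‖P‖ * δ)) := by
        gcongr
        exact (norm_sub_pow_apply_le_of_eq_add hB (e := fun n => u n - y) herr n).trans
          (by gcongr)
    _ = _ := by ring

/-- Discrete DSM iteration `u_{n+1} = u_n - hP(Au_n - f_δ)` with the a priori stopping
rule: if `n_δ h → ∞` and `n_δ h δ → 0` as `δ → 0`, then `‖u_{n_δ} - y‖ → 0`. -/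
theorem stmt16 {H : Type*} [NormedAddCommGroup H] [InnerProductSpace ℝ H] [CompleteSpace H]
    (A P : H →L[ℝ] H) (hsa : IsSelfAdjoint (P ∘L A))
    (hpos : ∀ x : H, 0 ≤ (inner ℝ ((P ∘L A) x) x : ℝ))
    (h : ℝ) (hh : 0 < h) (hT : h * ‖P ∘L A‖ < 2)
    (hker : LinearMap.ker ((P ∘L A : H →L[ℝ] H) : H →ₗ[ℝ] H) = LinearMap.ker (A : H →ₗ[ℝ] H))
    (f y u₀ : H) (hy : A y = f) (horth : u₀ - y ∈ (LinearMap.ker (A : H →ₗ[ℝ] H))ᗮ)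
    (fδ : ℝ → H) (hfδ : ∀ δ : ℝ, 0 < δ → ‖fδ δ - f‖ ≤ δ)
    (u : ℝ → ℕ → H)
    (hu0 : ∀ δ : ℝ, 0 < δ → u δ 0 = u₀)
    (hrec : ∀ δ : ℝ, 0 < δ → ∀ n : ℕ, u δ (n + 1) = u δ n - h • P (A (u δ n) - fδ δ))
    (nδ : ℝ → ℕ)
    (hnδ : Filter.Tendsto (fun δ => (nδ δ : ℝ) * h) (nhdsWithin 0 (Set.Ioi 0)) Filter.atTop)
    (hnδδ : Filter.Tendsto (fun δ => (nδ δ : ℝ) * h * δ) (nhdsWithin 0 (Set.Ioi 0)) (nhds 0)) :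
    Filter.Tendsto (fun δ => ‖u δ (nδ δ) - y‖) (nhdsWithin 0 (Set.Ioi 0)) (nhds 0) := by
  have hTpos : (P ∘L A).IsPositive := (isPositive_iff' _).2 ⟨hsa, hpos⟩
  have hbound : ∀ δ ∈ Set.Ioi (0 : ℝ), ‖u δ (nδ δ) - y‖
      ≤ ‖((1 - h • (P ∘L A)) ^ nδ δ) (u₀ - y)‖ + ‖P‖ * (nδ δ * h * δ) := fun δ hδ => by
    simpa only [hu0 δ hδ] using norm_iterate_sub_le_of_perturbed_data hh.le
      (hTpos.norm_one_sub_smul_le hh.le hT.le) hy (hfδ δ hδ) (hrec δ hδ) (nδ δ)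
  have hn : Tendsto nδ (𝓝[>] 0) atTop := by
    rw [← tendsto_natCast_atTop_iff (R := ℝ)]
    simpa [hh.ne'] using hnδ.atTop_div_const hh
  have hdecay := hTpos.tendsto_pow_apply_of_mem_orthogonal_ker hh hT (hker ▸ horth)
  refine squeeze_zero' (.of_forall fun _ => norm_nonneg _)
    (eventually_mem_nhdsWithin.mono hbound) ?_
  simpa using (hdecay.comp hn).norm.add (hnδδ.const_mul ‖P‖)
end
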